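/- Let n, p be positive integers and q an even integer with q ≥ 4 and 1 ≤ p < q/2. Then the n-th derivative of the function x ↦ sec(πx) evaluated at x = p/q equals −i^{n} · (2πq)^n · (2/(n+1)) · Σ_{α=1}^{q} (−1)^{α−1} e^{πi(2α−1)p/q} · B_{n+1}((2α−1)/(2q)), where B_{n+1} is the (n+1)-st Bernoulli polynomial and i = √(−1). -/

import Mathlib

/-!
For even `q`, summing a geometric series with ratio `-e^{2πix}` gives
`cos (π x) * ∑_{i<q} (-1)^i e^{(2i+1)πix} = (1 - e^{2πiqx}) / 2`, so that
`sec (π x) * (1 - e^{2πiqx})` is a finite exponential sum wherever `cos (π x) ≠ 0`.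
At a point with `qx ∈ ℤ` the factor `1 - e^{cx}`, `c = 2πiq`, vanishes and its `j`-th derivative
is `-c^j`, so Leibniz's rule turns this identity into a triangular recursion for the derivatives
of `sec (π x)`. The Bernoulli expression satisfies the same recursion, by
`∑_k C(n+1,k) B_{k+1}(y)/(k+1) = y^{n+1} - 1/(n+2)` and because the exponential weights sum to
zero at such a point; a triangular recursion has a unique solution.
-/

open Real Complex Finset

theorem eq_of_forall_sum_range_succ_mul_eq {R : Type*} [Ring R] [NoZeroDivisors R]
    {M : ℕ → ℕ → R} (hM : ∀ n, M n n ≠ 0) {X Y : ℕ → R}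
    (h : ∀ n, ∑ k ∈ range (n + 1), M n k * X k = ∑ k ∈ range (n + 1), M n k * Y k) : X = Y := by
  funext n
  induction n using Nat.strong_induction_on with
  | _ n ih =>
    have hn := h n
    rw [sum_range_succ, sum_range_succ,
      sum_congr rfl fun k hk => by rw [ih k (mem_range.1 hk)], add_left_cancel_iff] at hn
    exact mul_left_cancel₀ (hM n) hn

theorem sum_range_choose_mul_bernoulli_succ_div (n : ℕ) (y : ℚ) :
    ∑ k ∈ range (n + 1), ((n + 1).choose k : ℚ) * (Polynomial.bernoulli (k + 1)).eval y / (k + 1)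
      = y ^ (n + 1) - 1 / (n + 2) := by
  have h := congrArg (Polynomial.eval y) (Polynomial.sum_bernoulli (n + 1))
  rw [sum_range_succ', Polynomial.eval_add, Polynomial.eval_finsetSum] at h
  simp only [Polynomial.eval_smul, Polynomial.eval_monomial, smul_eq_mul,
    Polynomial.bernoulli_zero, Polynomial.eval_one, Nat.choose_zero_right] at h
  have hchoose : ∀ k, ((n + 1).choose k : ℚ) / (k + 1) = ((n + 2).choose (k + 1)) / (n + 2) :=
    fun k => by
      rw [div_eq_div_iff (by positivity) (by positivity)]
      exact_mod_cast (mul_comm _ _).trans (Nat.add_one_mul_choose_eq (n + 1) k)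
  simp_rw [mul_div_right_comm _ _ ((_ : ℚ) + 1), hchoose, div_mul_eq_mul_div, ← sum_div]
  push_cast at h
  field_simp
  linear_combination h

theorem sum_choose_mul_pow_mul_weighted_bernoulli {ι : Type*} (s : Finset ι) (w : ι → ℂ)
    (y : ι → ℚ) (hw : ∑ i ∈ s, w i = 0) (c : ℂ) (n : ℕ) :
    ∑ k ∈ range (n + 1), (n + 1).choose k * c ^ (n + 1 - k) *
        (-2 * c ^ k / (k + 1) * ∑ i ∈ s, w i * (((Polynomial.bernoulli (k + 1)).eval (y i) : ℚ) : ℂ)) =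
      -2 * ∑ i ∈ s, w i * (c * y i) ^ (n + 1) := by
  have hbern : ∀ i ∈ s, ∑ k ∈ range (n + 1), ((n + 1).choose k : ℂ) *
      (((Polynomial.bernoulli (k + 1)).eval (y i) : ℚ) : ℂ) / (k + 1) =
        (y i : ℂ) ^ (n + 1) - 1 / (n + 2) := fun i _ => by
    have h := congrArg ((↑) : ℚ → ℂ) (sum_range_choose_mul_bernoulli_succ_div n (y i))
    push_cast at h
    exact h
  calc _ = -2 * c ^ (n + 1) * ∑ i ∈ s, w i * ∑ k ∈ range (n + 1), ((n + 1).choose k : ℂ) *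
        (((Polynomial.bernoulli (k + 1)).eval (y i) : ℚ) : ℂ) / (k + 1) := by
        simp only [mul_sum]
        rw [sum_comm]
        refine sum_congr rfl fun i _ => sum_congr rfl fun k hk => ?_
        have hpow : c ^ (n + 1) = c ^ (n + 1 - k) * c ^ k := by
          rw [← pow_add, Nat.sub_add_cancel (by grind)]
        rw [hpow]
        ring
    _ = _ := by
        rw [sum_congr rfl fun i hi => by rw [hbern i hi]]
        simp only [mul_sub, sum_sub_distrib, ← sum_mul, hw, zero_mul, sub_zero]
        rw [mul_assoc, mul_sum]
        exact congrArg _ (sum_congr rfl fun i _ => by ring)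

theorem iteratedDeriv_ofReal_comp {f : ℝ → ℝ} {x : ℝ} {n : ℕ} (hf : ContDiffAt ℝ n f x) :
    iteratedDeriv n (fun t => (f t : ℂ)) x = iteratedDeriv n f x := by
  simp only [iteratedDeriv_eq_iteratedFDeriv]
  rw [show (fun t => (f t : ℂ)) = ofRealCLM ∘ f from rfl,
    ofRealCLM.iteratedFDeriv_comp_left hf le_rfl]
  rfl

theorem iteratedDeriv_cexp_const_mul_ofReal (n : ℕ) (a : ℂ) :
    iteratedDeriv n (fun x : ℝ => cexp (a * x)) = fun x : ℝ => a ^ n * cexp (a * x) := by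
  induction n with
  | zero => simp
  | succ n ih =>
    ext x
    rw [iteratedDeriv_succ, ih]
    have h : HasDerivAt (fun z : ℂ => a ^ n * cexp (a * z)) (a ^ n * (cexp (a * x) * a)) x :=
      (((hasDerivAt_id (x : ℂ)).const_mul a).cexp.const_mul _).congr_deriv (by simp)
    rw [h.comp_ofReal.deriv]
    ring

theorem iteratedDeriv_sum_mul_cexp_ofReal {ι : Type*} (s : Finset ι) (b a : ι → ℂ) (n : ℕ)
    (x : ℝ) :
    iteratedDeriv n (fun t : ℝ => ∑ i ∈ s, b i * cexp (a i * t)) x =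
      ∑ i ∈ s, b i * a i ^ n * cexp (a i * x) := by
  have hsmooth : ∀ i ∈ s, ContDiffAt ℝ n (fun t : ℝ => b i * cexp (a i * t)) x := fun i _ =>
    (contDiff_const.mul (contDiff_const.mul ofRealCLM.contDiff).cexp).contDiffAt
  rw [iteratedDeriv_fun_sum hsmooth]
  simp [iteratedDeriv_cexp_const_mul_ofReal, mul_assoc]

theorem cos_mul_sum_range_neg_one_pow_mul_exp {q : ℕ} (hq : Even q) (z : ℂ) :
    Complex.cos z * ∑ i ∈ range q, (-1) ^ i * cexp ((2 * i + 1) * I * z) =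
      (1 - cexp (2 * q * I * z)) / 2 := by
  set w := cexp (I * z)
  have hw : w ≠ 0 := Complex.exp_ne_zero _
  have hpow : ∀ k : ℕ, cexp (k * I * z) = w ^ k := fun k => by
    rw [← Complex.exp_nat_mul, mul_assoc]
  have hcos : Complex.cos z = (w + w⁻¹) / 2 := by
    simp only [Complex.cos, w, ← Complex.exp_neg]
    ring_nf
  have hterm : ∀ i : ℕ, (-1 : ℂ) ^ i * cexp ((2 * i + 1) * I * z) = w * (-w ^ 2) ^ i :=
    fun i => by
      rw [show ((2 * i + 1 : ℂ)) = ((2 * i + 1 : ℕ) : ℂ) by push_cast; ring, hpow, neg_pow]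
      ring
  rw [sum_congr rfl fun i _ => hterm i, ← mul_sum, show (2 * q : ℂ) = ((2 * q : ℕ) : ℂ) by
    push_cast; ring, hpow, hcos]
  have hgeom := geom_sum_mul (-w ^ 2) q
  rw [neg_pow, hq.neg_one_pow, ← pow_mul, mul_comm 2 q] at hgeom
  field_simp
  linear_combination -hgeom

theorem sec_pi_mul_mul_one_sub_cexp {q : ℕ} (hq : Even q) {t : ℝ}
    (ht : Real.cos (π * t) ≠ 0) :
    ((1 / Real.cos (π * t) : ℝ) : ℂ) * (1 - cexp (2 * π * q * I * t)) =
      2 * ∑ i ∈ range q, (-1) ^ i * cexp ((2 * i + 1) * π * I * t) := by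
  have hcosC : Complex.cos (π * t) ≠ 0 := by exact_mod_cast ht
  have h := cos_mul_sum_range_neg_one_pow_mul_exp hq (π * t)
  have hexp : ∀ i : ℕ, (2 * i + 1) * I * (π * t) = (2 * i + 1) * π * I * (t : ℂ) :=
    fun i => by ring
  simp only [hexp, show 2 * q * I * (π * t) = 2 * π * q * I * t by ring] at h
  rw [eq_div_iff two_ne_zero] at h
  push_cast
  rw [← h, one_div, inv_mul_eq_iff_eq_mul₀ hcosC]
  ring

theorem sum_choose_mul_iteratedDeriv_sec_pi_mul {q : ℕ} (hq : Even q) {x : ℝ}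
    (hcos : Real.cos (π * x) ≠ 0) (hx : cexp (2 * π * q * I * x) = 1) (n : ℕ) :
    ∑ k ∈ range (n + 1), (n + 1).choose k * (2 * π * q * I) ^ (n + 1 - k) *
        ((iteratedDeriv k (fun t => 1 / Real.cos (π * t)) x : ℝ) : ℂ) =
      -2 * ∑ i ∈ range q, (-1) ^ i * ((2 * i + 1) * π * I) ^ (n + 1) *
        cexp ((2 * i + 1) * π * I * x) := by
  set c : ℂ := 2 * π * q * I
  set sec : ℝ → ℝ := fun t => 1 / Real.cos (π * t)
  have hsec : ContDiffAt ℝ ⊤ sec x := by fun_prop (disch := assumption)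
  have hsecC : ContDiffAt ℝ ⊤ (fun t => (sec t : ℂ)) x :=
    ofRealCLM.contDiff.contDiffAt.comp x hsec
  have hu : ContDiffAt ℝ ⊤ (fun t : ℝ => 1 - cexp (c * t)) x :=
    (contDiff_const.sub (contDiff_const.mul ofRealCLM.contDiff).cexp).contDiffAt
  have hprod : (fun t : ℝ => (sec t : ℂ) * (1 - cexp (c * t))) =ᶠ[nhds x]
      fun t => 2 * ∑ i ∈ range q, (-1) ^ i * cexp ((2 * i + 1) * π * I * t) := by
    filter_upwards [(by fun_prop : Continuous fun t => Real.cos (π * t)).continuousAt.eventually_ne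
      hcos] with t ht using sec_pi_mul_mul_one_sub_cexp hq ht
  have hderiv_u : ∀ j, 0 < j → iteratedDeriv j (fun t : ℝ => 1 - cexp (c * t)) x = -c ^ j :=
    fun j hj => by simp [iteratedDeriv_const_sub hj, iteratedDeriv_cexp_const_mul_ofReal, hx]
  have hterm : ∀ k ∈ range (n + 1), ((n + 1).choose k : ℂ) *
      iteratedDeriv k (fun t => (sec t : ℂ)) x *
        iteratedDeriv (n + 1 - k) (fun t : ℝ => 1 - cexp (c * t)) x =
      -((n + 1).choose k * c ^ (n + 1 - k) * ((iteratedDeriv k sec x : ℝ) : ℂ)) := fun k hk => by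
    rw [hderiv_u _ (by grind), iteratedDeriv_ofReal_comp (hsec.of_le le_top)]
    ring
  have hleibniz := iteratedDeriv_fun_mul (n := n + 1) (hsecC.of_le le_top) (hu.of_le le_top)
  rw [hprod.iteratedDeriv_eq, iteratedDeriv_const_mul_field, iteratedDeriv_sum_mul_cexp_ofReal,
    sum_range_succ] at hleibniz
  simp only [Nat.sub_self, iteratedDeriv_zero, hx, sub_self, mul_zero, add_zero] at hleibniz
  rw [sum_congr rfl hterm, sum_neg_distrib] at hleibniz
  linear_combination hleibniz

theorem iteratedDeriv_sec_pi_mul_eq_sum_bernoulli {q : ℕ} (hq : Even q) (hq0 : q ≠ 0) {x : ℝ}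
    (hcos : Real.cos (π * x) ≠ 0) (hx : cexp (2 * π * q * I * x) = 1) (n : ℕ) :
    ((iteratedDeriv n (fun t => 1 / Real.cos (π * t)) x : ℝ) : ℂ) =
      -2 * (2 * π * q * I) ^ n / (n + 1) *
        ∑ i ∈ range q, (-1) ^ i * cexp ((2 * i + 1) * π * I * x) *
          (((Polynomial.bernoulli (n + 1)).eval (((2 * i + 1 : ℕ) : ℚ) / (2 * q)) : ℚ) : ℂ) := by
  set c : ℂ := 2 * π * q * I
  have hc : c ≠ 0 := by simp [c, hq0, pi_ne_zero, I_ne_zero]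
  have hweights : ∑ i ∈ range q, (-1) ^ i * cexp ((2 * i + 1) * π * I * x) = 0 := by
    have h := sec_pi_mul_mul_one_sub_cexp hq hcos
    rw [hx, sub_self, mul_zero, zero_eq_mul] at h
    exact h.resolve_left two_ne_zero
  have hfreq : ∀ i : ℕ, (2 * i + 1) * π * I = c * ((((2 * i + 1 : ℕ) : ℚ) / (2 * q) : ℚ) : ℂ) :=
    fun i => by
      push_cast
      field_simp
      ring
  revert n
  refine funext_iff.1 (eq_of_forall_sum_range_succ_mul_eq
    (M := fun n k => (n + 1).choose k * c ^ (n + 1 - k)) (fun n => ?_) (fun n => ?_))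
  · simp [hc, Nat.cast_add_one_ne_zero]
  · rw [sum_choose_mul_iteratedDeriv_sec_pi_mul hq hcos hx,
      sum_choose_mul_pow_mul_weighted_bernoulli _ _ _ hweights]
    refine congrArg _ (sum_congr rfl fun i _ => ?_)
    rw [hfreq]
    ring

theorem cos_pi_mul_natCast_div_pos {p q : ℕ} (hpq : 2 * p < q) :
    0 < Real.cos (π * (p / q)) := by
  have hlt : (p : ℝ) / q < 1 / 2 := by
    rw [div_lt_div_iff₀ (by exact_mod_cast (by omega : 0 < q)) two_pos]
    exact_mod_cast (by omega : p * 2 < 1 * q)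
  apply Real.cos_pos_of_mem_Ioo
  constructor <;> nlinarith [pi_pos, (by positivity : (0 : ℝ) ≤ p / q)]

theorem iteratedDeriv_sec_ratPi_even_general (n p q : ℕ) (hq : Even q) (hpq : 2 * p < q) :
    ((iteratedDeriv n (fun x : ℝ => 1 / Real.cos (Real.pi * x)) ((p : ℝ) / q) : ℝ) : ℂ) =
      -(Complex.I ^ n) * (2 * Real.pi * q) ^ n * (2 / (n + 1)) *
        ∑ α ∈ Finset.Icc 1 q,
          (-1 : ℂ) ^ (α - 1) * Complex.exp (Real.pi * Complex.I * (2 * α - 1) * p / q) *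
            ((Polynomial.eval (((2 * α - 1 : ℕ) : ℚ) / (2 * q)) (Polynomial.bernoulli (n + 1)) : ℚ) : ℂ) := by
  have hq0 : q ≠ 0 := by omega
  have hx : cexp (2 * π * q * I * ((p / q : ℝ) : ℂ)) = 1 := by
    rw [← Complex.exp_nat_mul_two_pi_mul_I p]
    push_cast
    congr 1
    field_simp
  rw [iteratedDeriv_sec_pi_mul_eq_sum_bernoulli hq hq0 (cos_pi_mul_natCast_div_pos hpq).ne' hx,
    ← Ico_add_one_right_eq_Icc, sum_Ico_eq_sum_range, Nat.add_sub_cancel]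
  have hterm : ∀ i ∈ range q, (-1 : ℂ) ^ (1 + i - 1) *
      cexp (π * I * (2 * ((1 + i : ℕ) : ℂ) - 1) * p / q) *
      ((Polynomial.eval (((2 * (1 + i) - 1 : ℕ) : ℚ) / (2 * q)) (Polynomial.bernoulli (n + 1)) : ℚ) : ℂ) =
      (-1) ^ i * cexp ((2 * i + 1) * π * I * ((p / q : ℝ) : ℂ)) *
      ((Polynomial.eval (((2 * i + 1 : ℕ) : ℚ) / (2 * q)) (Polynomial.bernoulli (n + 1)) : ℚ) : ℂ) :=
    fun i _ => by
      rw [show 1 + i - 1 = i by omega, show 2 * (1 + i) - 1 = 2 * i + 1 by omega]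
      push_cast
      ring_nf
  rw [sum_congr rfl hterm, mul_pow]
  ring

/-- **Theorem 2(ii), even case** (Cvijović): closed form for the derivatives of the secant
function at rational multiples of π with even denominator, in terms of Bernoulli polynomials. -/
theorem iteratedDeriv_sec_ratPi_even (n p q : ℕ) (hn : 0 < n) (hp : 1 ≤ p)
    (hq : Even q) (hq4 : 4 ≤ q) (hpq : 2 * p < q) :
    ((iteratedDeriv n (fun x : ℝ => 1 / Real.cos (Real.pi * x)) ((p : ℝ) / q) : ℝ) : ℂ) =
      -(Complex.I ^ n) * (2 * Real.pi * q) ^ n * (2 / (n + 1)) *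
        ∑ α ∈ Finset.Icc 1 q,
          (-1 : ℂ) ^ (α - 1) * Complex.exp (Real.pi * Complex.I * (2 * α - 1) * p / q) *
            ((Polynomial.eval (((2 * α - 1 : ℕ) : ℚ) / (2 * q)) (Polynomial.bernoulli (n + 1)) : ℚ) : ℂ) :=
  iteratedDeriv_sec_ratPi_even_general n p q hq hpq
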